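/- Let C be a cocommutative coalgebra, X a symmetric C-bicomodule, and ω : X → C⊗C a symmetric normalized 2-cocycle. Then C̃ := C ⊕ X with comultiplication Δ_{C̃}(c,x) = Σ(c₍₁₎,0)⊗(c₍₂₎,0) + Σ(x₍−1₎,0)⊗(0,x₍0₎) + Σ(0,x₍0₎)⊗(x₍1₎,0) + Σ(ω₁(x),0)⊗(ω₂(x),0) and counit ε(c,x) = ε_C(c) is a coassociative counital cocommutative coalgebra. -/

import Mathlib

/-!
On `C` the comultiplication `Δ̃` is `Δ`; on `X` it is `ρ_l + ρ + ω` with `ρ_l = τ ∘ ρ`, each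
term landing in its own summand of `C̃ ⊗ C̃`. Applying `Δ̃` once more and sorting the result into
the summands of `C̃ ⊗ C̃ ⊗ C̃`, coassociativity on `X` splits into four identities: in
`C ⊗ C ⊗ X` the coassociativity of `ρ_l`, in `C ⊗ X ⊗ C` the compatibility of `ρ_l` with `ρ`,
in `X ⊗ C ⊗ C` the coassociativity of `ρ`, and in `C ⊗ C ⊗ C` the cocycle identity. The first
two follow from the coassociativity of `ρ`: both sides are permutations of `(id ⊗ Δ) (ρ x)`
differing by a swap of its two `C` factors, which fixes it since `C` is cocommutative. The counit
laws reduce to the counit law of `ρ` and the normalization of `ω`, and cocommutativity of `Δ̃`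
to that of `Δ` and the symmetry of `ω`.
-/

open TensorProduct

section
variable {k : Type*} [Field k] {C X : Type*}
  [AddCommGroup C] [Module k C] [Coalgebra k C]
  [AddCommGroup X] [Module k X]

/-- The comultiplication on `C̃ = C ⊕ X` built from the comultiplication of `C`, a
(symmetric) coaction `ρ` on `X` and a 2-cocycle `ω : X → C ⊗ C`. -/
noncomputable def extComul (ρ : X →ₗ[k] X ⊗[k] C) (ω : X →ₗ[k] C ⊗[k] C) :
    (C × X) →ₗ[k] (C × X) ⊗[k] (C × X) :=
  TensorProduct.map (LinearMap.inl k C X) (LinearMap.inl k C X) ∘ₗ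
      (Coalgebra.comul : C →ₗ[k] C ⊗[k] C) ∘ₗ LinearMap.fst k C X
    + TensorProduct.map (LinearMap.inl k C X) (LinearMap.inr k C X) ∘ₗ
      ((TensorProduct.comm k X C).toLinearMap ∘ₗ ρ) ∘ₗ LinearMap.snd k C X
    + TensorProduct.map (LinearMap.inr k C X) (LinearMap.inl k C X) ∘ₗ
      ρ ∘ₗ LinearMap.snd k C X
    + TensorProduct.map (LinearMap.inl k C X) (LinearMap.inl k C X) ∘ₗ
      ω ∘ₗ LinearMap.snd k C X

/-- The counit on `C̃ = C ⊕ X`. -/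
noncomputable def extCounit : (C × X) →ₗ[k] k :=
  (Coalgebra.counit : C →ₗ[k] k) ∘ₗ LinearMap.fst k C X

end

open LinearMap

section TensorIdentities
variable {k M N P : Type*} [CommSemiring k] [AddCommMonoid M] [Module k M]
  [AddCommMonoid N] [Module k N] [AddCommMonoid P] [Module k P]

theorem assoc_comm_lTensor_comm (t : M ⊗[k] (N ⊗[k] P)) :
    TensorProduct.assoc k P N M (TensorProduct.comm k M (P ⊗[k] N)
        (lTensor M (TensorProduct.comm k N P) t)) =
      lTensor P (TensorProduct.comm k M N)
        (TensorProduct.comm k (M ⊗[k] N) P ((TensorProduct.assoc k M N P).symm t)) := by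
  induction t using TensorProduct.induction_on with
  | zero => simp
  | tmul m u => induction u using TensorProduct.induction_on <;> simp_all [tmul_add]
  | add t u ht hu => simp only [map_add, ht, hu]

theorem assoc_rTensor_comm_assoc_symm_lTensor_comm (t : M ⊗[k] (N ⊗[k] P)) :
    TensorProduct.assoc k P M N (rTensor N (TensorProduct.comm k M P)
        ((TensorProduct.assoc k M P N).symm (lTensor M (TensorProduct.comm k N P) t))) =
      TensorProduct.comm k (M ⊗[k] N) P ((TensorProduct.assoc k M N P).symm t) := by
  induction t using TensorProduct.induction_on with
  | zero => simp
  | tmul m u => induction u using TensorProduct.induction_on <;> simp_all [tmul_add]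
  | add t u ht hu => simp only [map_add, ht, hu]

theorem lid_map_apply (f : M →ₗ[k] k) (g : N →ₗ[k] P) (t : M ⊗[k] N) :
    TensorProduct.lid k P (map f g t) = g (TensorProduct.lid k N (rTensor N f t)) :=
  congr($(CoassocSimps.lid_comp_map f g) t)

theorem rid_map_apply (f : M →ₗ[k] P) (g : N →ₗ[k] k) (t : M ⊗[k] N) :
    TensorProduct.rid k P (map f g t) = f (TensorProduct.rid k M (lTensor M g t)) :=
  congr($(CoassocSimps.rid_comp_map f g) t)

end TensorIdentities

section LeftCoaction
variable {k C X : Type*} [CommSemiring k] [AddCommMonoid C] [Module k C]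
  [AddCommMonoid X] [Module k X]

def leftCoaction (ρ : X →ₗ[k] X ⊗[k] C) : X →ₗ[k] C ⊗[k] X :=
  (TensorProduct.comm k X C).toLinearMap ∘ₗ ρ

theorem leftCoaction_apply (ρ : X →ₗ[k] X ⊗[k] C) (x : X) :
    leftCoaction ρ x = TensorProduct.comm k X C (ρ x) := rfl

variable [Coalgebra k C] {ρ : X →ₗ[k] X ⊗[k] C}

theorem lid_rTensor_counit_leftCoaction
    (hcounit : (TensorProduct.rid k X).toLinearMap ∘ₗ
      LinearMap.lTensor X (Coalgebra.counit : C →ₗ[k] k) ∘ₗ ρ = LinearMap.id) (x : X) :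
    TensorProduct.lid k X (rTensor X Coalgebra.counit (leftCoaction ρ x)) = x := by
  rw [leftCoaction_apply, rTensor_comm, TensorProduct.lid_comm]
  exact congr($hcounit x)

theorem rTensor_coaction_coaction_eq_assoc_symm
    (hcoassoc : (TensorProduct.assoc k X C C).toLinearMap ∘ₗ LinearMap.rTensor C ρ ∘ₗ ρ =
      LinearMap.lTensor X (Coalgebra.comul : C →ₗ[k] C ⊗[k] C) ∘ₗ ρ) (x : X) :
    rTensor C ρ (ρ x) = (TensorProduct.assoc k X C C).symm (lTensor X Coalgebra.comul (ρ x)) := by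
  rw [LinearEquiv.eq_symm_apply]
  exact congr($hcoassoc x)

variable [Coalgebra.IsCocomm k C]

theorem lTensor_comm_lTensor_comul (t : X ⊗[k] C) :
    lTensor X (TensorProduct.comm k C C) (lTensor X Coalgebra.comul t) =
      lTensor X Coalgebra.comul t := by
  rw [← comp_apply (lTensor X _), ← lTensor_comp, Coalgebra.comm_comp_comul]

theorem leftCoaction_coassoc
    (hcoassoc : (TensorProduct.assoc k X C C).toLinearMap ∘ₗ LinearMap.rTensor C ρ ∘ₗ ρ =
      LinearMap.lTensor X (Coalgebra.comul : C →ₗ[k] C ⊗[k] C) ∘ₗ ρ) (x : X) :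
    TensorProduct.assoc k C C X (rTensor X Coalgebra.comul (leftCoaction ρ x)) =
      lTensor C (leftCoaction ρ) (leftCoaction ρ x) := by
  calc _ = TensorProduct.assoc k C C X (TensorProduct.comm k X (C ⊗[k] C)
          (lTensor X (TensorProduct.comm k C C) (lTensor X Coalgebra.comul (ρ x)))) := by
        rw [leftCoaction_apply, rTensor_comm, lTensor_comm_lTensor_comul]
    _ = lTensor C (TensorProduct.comm k X C)
          (TensorProduct.comm k (X ⊗[k] C) C (rTensor C ρ (ρ x))) := by
        rw [assoc_comm_lTensor_comm, rTensor_coaction_coaction_eq_assoc_symm hcoassoc]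
    _ = _ := by rw [leftCoaction_apply, leftCoaction, lTensor_comp_apply, lTensor_comm ρ]

theorem assoc_rTensor_leftCoaction_coaction
    (hcoassoc : (TensorProduct.assoc k X C C).toLinearMap ∘ₗ LinearMap.rTensor C ρ ∘ₗ ρ =
      LinearMap.lTensor X (Coalgebra.comul : C →ₗ[k] C ⊗[k] C) ∘ₗ ρ) (x : X) :
    TensorProduct.assoc k C X C (rTensor C (leftCoaction ρ) (ρ x)) =
      lTensor C ρ (leftCoaction ρ x) := by
  calc _ = TensorProduct.assoc k C X C (rTensor C (TensorProduct.comm k X C)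
          ((TensorProduct.assoc k X C C).symm (lTensor X (TensorProduct.comm k C C)
            (lTensor X Coalgebra.comul (ρ x))))) := by
        rw [leftCoaction, rTensor_comp_apply, rTensor_coaction_coaction_eq_assoc_symm hcoassoc,
          lTensor_comm_lTensor_comul]
    _ = _ := by
        rw [assoc_rTensor_comm_assoc_symm_lTensor_comm,
          ← rTensor_coaction_coaction_eq_assoc_symm hcoassoc, leftCoaction_apply, lTensor_comm]

end LeftCoaction

section Extension
variable {k C X : Type*} [Field k] [AddCommGroup C] [Module k C] [Coalgebra k C]
  [AddCommGroup X] [Module k X] {ρ : X →ₗ[k] X ⊗[k] C} {ω : X →ₗ[k] C ⊗[k] C}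

theorem extComul_inl (c : C) :
    extComul ρ ω (c, 0) = map (inl k C X) (inl k C X) (Coalgebra.comul c) := by
  simp [extComul]

theorem extComul_inr (x : X) :
    extComul ρ ω (0, x) = map (inl k C X) (inr k C X) (leftCoaction ρ x) +
      map (inr k C X) (inl k C X) (ρ x) + map (inl k C X) (inl k C X) (ω x) := by
  simp [extComul, leftCoaction]

theorem extComul_comp_inl :
    extComul ρ ω ∘ₗ inl k C X = map (inl k C X) (inl k C X) ∘ₗ Coalgebra.comul :=
  LinearMap.ext extComul_inl

theorem extComul_comp_inr :
    extComul ρ ω ∘ₗ inr k C X = map (inl k C X) (inr k C X) ∘ₗ leftCoaction ρ +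
      map (inr k C X) (inl k C X) ∘ₗ ρ + map (inl k C X) (inl k C X) ∘ₗ ω :=
  LinearMap.ext extComul_inr

theorem extCounit_comp_inl : extCounit ∘ₗ inl k C X = Coalgebra.counit := by
  ext c; simp [extCounit]

theorem extCounit_comp_inr : extCounit ∘ₗ inr k C X = 0 := by
  ext x; simp [extCounit]

theorem coassoc_extComul [Coalgebra.IsCocomm k C]
    (hcoassoc : (TensorProduct.assoc k X C C).toLinearMap ∘ₗ LinearMap.rTensor C ρ ∘ₗ ρ =
      LinearMap.lTensor X (Coalgebra.comul : C →ₗ[k] C ⊗[k] C) ∘ₗ ρ)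
    (hcocycle : LinearMap.lTensor C ω ∘ₗ ((TensorProduct.comm k X C).toLinearMap ∘ₗ ρ)
      - (TensorProduct.assoc k C C C).toLinearMap ∘ₗ
          LinearMap.rTensor C (Coalgebra.comul : C →ₗ[k] C ⊗[k] C) ∘ₗ ω
      + LinearMap.lTensor C (Coalgebra.comul : C →ₗ[k] C ⊗[k] C) ∘ₗ ω
      - (TensorProduct.assoc k C C C).toLinearMap ∘ₗ LinearMap.rTensor C ω ∘ₗ ρ = 0) :
    (TensorProduct.assoc k (C × X) (C × X) (C × X)).toLinearMap ∘ₗ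
        LinearMap.rTensor (C × X) (extComul ρ ω) ∘ₗ extComul ρ ω =
      LinearMap.lTensor (C × X) (extComul ρ ω) ∘ₗ extComul ρ ω := by
  apply LinearMap.prod_ext
  · ext c : 1
    simp only [comp_apply, inl_apply, LinearEquiv.coe_coe, extComul_inl, rTensor_map, lTensor_map,
      extComul_comp_inl, ← map_rTensor, ← map_lTensor, ← map_map_assoc, Coalgebra.coassoc_apply]
  · ext x : 1
    have hcoassoc_x :
        TensorProduct.assoc k X C C (rTensor C ρ (ρ x)) = lTensor X Coalgebra.comul (ρ x) :=
      congr($hcoassoc x)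
    have hcocycle_x : TensorProduct.assoc k C C C (rTensor C ω (ρ x)) +
          TensorProduct.assoc k C C C (rTensor C Coalgebra.comul (ω x)) =
        lTensor C ω (leftCoaction ρ x) + lTensor C Coalgebra.comul (ω x) := by
      have := congr($hcocycle x)
      simp only [LinearMap.sub_apply, LinearMap.add_apply, comp_apply, LinearEquiv.coe_coe,
        LinearMap.zero_apply] at this
      rw [leftCoaction_apply]
      linear_combination (norm := abel) -this
    simp only [comp_apply, inr_apply, LinearEquiv.coe_coe, extComul_inr, map_add, rTensor_map,
      lTensor_map, extComul_comp_inl, extComul_comp_inr, map_add_left, map_add_right,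
      LinearMap.add_apply, ← map_rTensor, ← map_lTensor, ← map_map_assoc,
      leftCoaction_coassoc hcoassoc, assoc_rTensor_leftCoaction_coaction hcoassoc, hcoassoc_x]
    have := congr(map (inl k C X) (map (inl k C X) (inl k C X)) $hcocycle_x)
    rw [map_add, map_add] at this
    linear_combination (norm := abel) this

theorem rTensor_extCounit_comp_extComul
    (hcounit : (TensorProduct.rid k X).toLinearMap ∘ₗ
      LinearMap.lTensor X (Coalgebra.counit : C →ₗ[k] k) ∘ₗ ρ = LinearMap.id)
    (hnorm₁ : (TensorProduct.lid k C).toLinearMap ∘ₗ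
      LinearMap.rTensor C (Coalgebra.counit : C →ₗ[k] k) ∘ₗ ω = 0) :
    (TensorProduct.lid k (C × X)).toLinearMap ∘ₗ
        LinearMap.rTensor (C × X) (extCounit (k := k) (C := C) (X := X)) ∘ₗ extComul ρ ω =
      LinearMap.id := by
  apply LinearMap.prod_ext
  · ext c : 1
    simp [extComul_inl, extCounit_comp_inl, lid_map_apply]
  · ext x : 1
    have hnorm₁_x : TensorProduct.lid k C (rTensor C Coalgebra.counit (ω x)) = 0 :=
      congr($hnorm₁ x)
    simp [extComul_inr, extCounit_comp_inl, extCounit_comp_inr, lid_map_apply, hnorm₁_x,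
      lid_rTensor_counit_leftCoaction hcounit]

theorem lTensor_extCounit_comp_extComul
    (hcounit : (TensorProduct.rid k X).toLinearMap ∘ₗ
      LinearMap.lTensor X (Coalgebra.counit : C →ₗ[k] k) ∘ₗ ρ = LinearMap.id)
    (hnorm₂ : (TensorProduct.rid k C).toLinearMap ∘ₗ
      LinearMap.lTensor C (Coalgebra.counit : C →ₗ[k] k) ∘ₗ ω = 0) :
    (TensorProduct.rid k (C × X)).toLinearMap ∘ₗ
        LinearMap.lTensor (C × X) (extCounit (k := k) (C := C) (X := X)) ∘ₗ extComul ρ ω =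
      LinearMap.id := by
  apply LinearMap.prod_ext
  · ext c : 1
    simp [extComul_inl, extCounit_comp_inl, rid_map_apply]
  · ext x : 1
    have hcounit_x : TensorProduct.rid k X (lTensor X Coalgebra.counit (ρ x)) = x :=
      congr($hcounit x)
    have hnorm₂_x : TensorProduct.rid k C (lTensor C Coalgebra.counit (ω x)) = 0 :=
      congr($hnorm₂ x)
    simp [extComul_inr, extCounit_comp_inl, extCounit_comp_inr, rid_map_apply, hcounit_x,
      hnorm₂_x]

theorem comm_comp_extComul [Coalgebra.IsCocomm k C]
    (hsymm : (TensorProduct.comm k C C).toLinearMap ∘ₗ ω = ω) :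
    (TensorProduct.comm k (C × X) (C × X)).toLinearMap ∘ₗ extComul ρ ω = extComul ρ ω := by
  apply LinearMap.prod_ext
  · ext c : 1
    simp [extComul_inl, ← map_comm]
  · ext x : 1
    have hsymm_x : TensorProduct.comm k C C (ω x) = ω x := congr($hsymm x)
    simp [extComul_inr, ← map_comm, hsymm_x, leftCoaction]
    abel

end Extension

theorem extension_coalgebra_structure {k : Type*} [Field k] {C X : Type*}
    [AddCommGroup C] [Module k C] [Coalgebra k C]
    [AddCommGroup X] [Module k X]
    (hcocomm : (TensorProduct.comm k C C).toLinearMap ∘ₗ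
      (Coalgebra.comul : C →ₗ[k] C ⊗[k] C) = Coalgebra.comul)
    (ρ : X →ₗ[k] X ⊗[k] C)
    (hcoassoc : (TensorProduct.assoc k X C C).toLinearMap ∘ₗ LinearMap.rTensor C ρ ∘ₗ ρ =
      LinearMap.lTensor X (Coalgebra.comul : C →ₗ[k] C ⊗[k] C) ∘ₗ ρ)
    (hcounit : (TensorProduct.rid k X).toLinearMap ∘ₗ
      LinearMap.lTensor X (Coalgebra.counit : C →ₗ[k] k) ∘ₗ ρ = LinearMap.id)
    (ω : X →ₗ[k] C ⊗[k] C)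
    (hsymm : (TensorProduct.comm k C C).toLinearMap ∘ₗ ω = ω)
    (hnorm₁ : (TensorProduct.lid k C).toLinearMap ∘ₗ
      LinearMap.rTensor C (Coalgebra.counit : C →ₗ[k] k) ∘ₗ ω = 0)
    (hnorm₂ : (TensorProduct.rid k C).toLinearMap ∘ₗ
      LinearMap.lTensor C (Coalgebra.counit : C →ₗ[k] k) ∘ₗ ω = 0)
    (hcocycle : LinearMap.lTensor C ω ∘ₗ ((TensorProduct.comm k X C).toLinearMap ∘ₗ ρ)
      - (TensorProduct.assoc k C C C).toLinearMap ∘ₗ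
          LinearMap.rTensor C (Coalgebra.comul : C →ₗ[k] C ⊗[k] C) ∘ₗ ω
      + LinearMap.lTensor C (Coalgebra.comul : C →ₗ[k] C ⊗[k] C) ∘ₗ ω
      - (TensorProduct.assoc k C C C).toLinearMap ∘ₗ LinearMap.rTensor C ω ∘ₗ ρ = 0) :
    -- coassociativity of the extension comultiplication
    (TensorProduct.assoc k (C × X) (C × X) (C × X)).toLinearMap ∘ₗ
        LinearMap.rTensor (C × X) (extComul ρ ω) ∘ₗ extComul ρ ω =
      LinearMap.lTensor (C × X) (extComul ρ ω) ∘ₗ extComul ρ ω ∧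
    -- left counit law
    (TensorProduct.lid k (C × X)).toLinearMap ∘ₗ
        LinearMap.rTensor (C × X) (extCounit (k := k) (C := C) (X := X)) ∘ₗ extComul ρ ω =
      LinearMap.id ∧
    -- right counit law
    (TensorProduct.rid k (C × X)).toLinearMap ∘ₗ
        LinearMap.lTensor (C × X) (extCounit (k := k) (C := C) (X := X)) ∘ₗ extComul ρ ω =
      LinearMap.id ∧
    -- cocommutativity
    (TensorProduct.comm k (C × X) (C × X)).toLinearMap ∘ₗ extComul ρ ω = extComul ρ ω := by
  have : Coalgebra.IsCocomm k C := ⟨hcocomm⟩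
  exact ⟨coassoc_extComul hcoassoc hcocycle, rTensor_extCounit_comp_extComul hcounit hnorm₁,
    lTensor_extCounit_comp_extComul hcounit hnorm₂, comm_comp_extComul hsymm⟩
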